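/- Suppose: (1) the kernel of Γ is spanned by a unit vector v ∈ ℝ^m with strictly positive entries; (2) every solution of Ṡ = ΓR(S) on ℝⁿ_{≥0} is bounded; (3) σ ∈ ℝⁿ_{≥0} is such that the extent system ẋ = R(σ + Γx) on X_σ is strongly monotone with respect to a closed pointed convex cone K ⊆ ℝ^m with v ∈ interior(K) (i.e., for its forward-complete flow ψ_t, x₁ ≻ x₂ implies ψ_t(x₁) ≫ ψ_t(x₂) for all t > 0). Then there exists ζ = ζ_σ ∈ ℝⁿ_{≥0} such that for every ρ ∈ ℝⁿ_{≥0} with ρ − σ ∈ Image(Γ), the solution S(t) of Ṡ = ΓR(S) with S(0) = ρ satisfies S(t) → ζ as t → ∞. -/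

import Mathlib

open Filter Topology Set

/-!
Write `M(z/v) = inf {c | z ≤ c • v}` for the order of `K`. Since the extent flow `ψ` commutes
with translations along `v` (because `Γ v = 0`), monotonicity makes it nonexpansive for the
seminorm `osc z = M(z/v) + M(-z/v)`, and strong monotonicity makes it strictly contracting on
pairs whose difference is not a multiple of `v`. The seminorms `osc` and `‖Γ ·‖` have the same
kernel `ℝ ∙ v`, hence are equivalent. Bounded chemical orbits give a limit point of each extent
orbit modulo `v`; a LaSalle-type argument shows that it is an equilibrium modulo `v` and that the
whole orbit converges to it modulo `v`. By strict contraction two equilibria modulo `v` differ by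
a multiple of `v`, so all orbits `S(t) = σ + Γ ψ_t(x)` of a stoichiometric class share one limit.
-/

section ODE

theorem LocallyLipschitzOn.comp_lipschitzWith {α β γ : Type*} [PseudoEMetricSpace α]
    [PseudoEMetricSpace β] [PseudoEMetricSpace γ] {f : β → γ} {g : α → β} {s : Set β}
    {K : NNReal} (hf : LocallyLipschitzOn s f) (hg : LipschitzWith K g) :
    LocallyLipschitzOn (g ⁻¹' s) (f ∘ g) := by
  intro x hx
  obtain ⟨L, t, ht, hL⟩ := hf hx
  exact ⟨L * K, g ⁻¹' t,
    hg.continuous.continuousWithinAt.tendsto_nhdsWithin (mapsTo_preimage g s) ht,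
    hL.comp hg.lipschitzOnWith (mapsTo_preimage g t)⟩

theorem LipschitzWith.comp_locallyLipschitzOn {α β γ : Type*} [PseudoEMetricSpace α]
    [PseudoEMetricSpace β] [PseudoEMetricSpace γ] {f : α → β} {g : β → γ} {s : Set α}
    {K : NNReal} (hg : LipschitzWith K g) (hf : LocallyLipschitzOn s f) :
    LocallyLipschitzOn s (g ∘ f) := by
  intro x hx
  obtain ⟨L, t, ht, hL⟩ := hf hx
  exact ⟨K * L, t, ht, hg.comp_lipschitzOnWith hL⟩

variable {E : Type*} [NormedAddCommGroup E] [NormedSpace ℝ E]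

theorem ODE_solution_unique_Ici_of_locallyLipschitzOn {F : E → E} {Ω : Set E} {f g : ℝ → E}
    (hF : LocallyLipschitzOn Ω F)
    (hf : ∀ t, 0 ≤ t → f t ∈ Ω ∧ HasDerivWithinAt f (F (f t)) (Ici 0) t)
    (hg : ∀ t, 0 ≤ t → g t ∈ Ω ∧ HasDerivWithinAt g (F (g t)) (Ici 0) t)
    (h0 : f 0 = g 0) : EqOn f g (Ici 0) := by
  have hfc : ContinuousOn f (Ici 0) := fun t ht => (hf t ht).2.continuousWithinAt
  have hgc : ContinuousOn g (Ici 0) := fun t ht => (hg t ht).2.continuousWithinAt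
  intro T hT
  refine IsClosed.Icc_subset_of_forall_mem_nhdsWithin (s := {t | f t = g t}) ?_ h0 ?_
    ⟨hT, le_rfl⟩
  · rw [inter_comm]
    exact ((hfc.prodMk hgc).mono Icc_subset_Ici_self).preimage_isClosed_of_isClosed
      isClosed_Icc isClosed_diagonal
  rintro t ⟨hft, ht0, -⟩
  obtain ⟨L, U, hU, hLip⟩ := hF (hf t ht0).1
  have hnear : ∀ h : ℝ → E, (∀ t, 0 ≤ t → h t ∈ Ω ∧ HasDerivWithinAt h (F (h t)) (Ici 0) t) →
      h t = f t → ∀ᶠ u in 𝓝[≥] t, h u ∈ U := fun h hh hht =>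
    ((hh t ht0).2.continuousWithinAt.mono (Ici_subset_Ici.2 ht0)).tendsto_nhdsWithin
      (fun u hu => (hh u (ht0.trans hu)).1) (hht ▸ hU)
  obtain ⟨b, hb, hbU⟩ :=
    mem_nhdsGE_iff_exists_Icc_subset.1 ((hnear f hf rfl).and (hnear g hg hft.symm))
  have hsol : ∀ h : ℝ → E, (∀ t, 0 ≤ t → h t ∈ Ω ∧ HasDerivWithinAt h (F (h t)) (Ici 0) t) →
      ∀ u ∈ Ico t b, HasDerivWithinAt h (F (h u)) (Ici u) u := fun h hh u hu =>
    (hh u (ht0.trans hu.1)).2.mono (Ici_subset_Ici.2 (ht0.trans hu.1))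
  have heq := ODE_solution_unique_of_mem_Icc_right (v := fun _ => F) (s := fun _ => U)
    (fun _ _ => hLip) (hfc.mono fun u hu => ht0.trans hu.1) (hsol f hf)
    (fun u hu => (hbU (Ico_subset_Icc_self hu)).1) (hgc.mono fun u hu => ht0.trans hu.1)
    (hsol g hg) (fun u hu => (hbU (Ico_subset_Icc_self hu)).2) hft
  filter_upwards [Ioo_mem_nhdsGT hb] with u hu using heq (Ioo_subset_Icc_self hu)

structure IsForwardFlowOn (F : E → E) (Ω : Set E) (φ : ℝ → E → E) : Prop where
  zero : ∀ x ∈ Ω, φ 0 x = x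
  mem : ∀ x ∈ Ω, ∀ t, 0 ≤ t → φ t x ∈ Ω
  hasDerivWithinAt : ∀ x ∈ Ω, ∀ t, 0 ≤ t →
    HasDerivWithinAt (fun s => φ s x) (F (φ t x)) (Ici 0) t

namespace IsForwardFlowOn

variable {F : E → E} {Ω : Set E} {φ : ℝ → E → E}

theorem flow_add (hφ : IsForwardFlowOn F Ω φ) (hF : LocallyLipschitzOn Ω F) {x : E}
    (hx : x ∈ Ω) {s t : ℝ} (hs : 0 ≤ s) (ht : 0 ≤ t) : φ (s + t) x = φ t (φ s x) := by
  have hsx := hφ.mem x hx s hs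
  refine ODE_solution_unique_Ici_of_locallyLipschitzOn hF (f := fun t => φ (s + t) x)
    (fun u hu => ⟨hφ.mem x hx _ (by positivity), ?_⟩)
    (fun u hu => ⟨hφ.mem _ hsx u hu, hφ.hasDerivWithinAt _ hsx u hu⟩)
    (by simp [hφ.zero _ hsx]) ht
  have hshift : HasDerivWithinAt (fun u : ℝ => s + u) 1 (Ici 0) u :=
    ((hasDerivAt_id u).const_add s).hasDerivWithinAt
  have := (hφ.hasDerivWithinAt x hx (s + u) (by positivity)).scomp u hshift
    fun w (hw : 0 ≤ w) => (by simp only [mem_Ici]; positivity : s + w ∈ Ici 0)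
  rwa [one_smul] at this

theorem flow_add_const (hφ : IsForwardFlowOn F Ω φ) (hF : LocallyLipschitzOn Ω F) {w : E}
    (hFw : ∀ x, F (x + w) = F x) (hΩw : ∀ x ∈ Ω, x + w ∈ Ω) {x : E} (hx : x ∈ Ω) {t : ℝ}
    (ht : 0 ≤ t) : φ t (x + w) = φ t x + w :=
  ODE_solution_unique_Ici_of_locallyLipschitzOn hF
    (fun u hu => ⟨hφ.mem _ (hΩw x hx) u hu, hφ.hasDerivWithinAt _ (hΩw x hx) u hu⟩)
    (fun u hu => ⟨hΩw _ (hφ.mem x hx u hu), by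
      simpa only [hFw] using (hφ.hasDerivWithinAt x hx u hu).add_const w⟩)
    (by rw [hφ.zero _ (hΩw x hx), hφ.zero x hx]) ht

end IsForwardFlowOn

end ODE

section Cone

variable {E : Type*} [NormedAddCommGroup E] [NormedSpace ℝ E]

namespace ConvexCone

def ofConvex {K : Set E} (hconv : Convex ℝ K) (hcone : ∀ c : ℝ, 0 < c → ∀ x ∈ K, c • x ∈ K) :
    ConvexCone ℝ E where
  carrier := K
  smul_mem' c hc x hx := hcone c hc x hx
  add_mem' x hx y hy := by
    convert hcone 2 two_pos _ (hconv hx hy (by norm_num : (0 : ℝ) ≤ 1 / 2)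
      (by norm_num : (0 : ℝ) ≤ 1 / 2) (by norm_num)) using 1
    module

structure IsInteriorUnit (K : ConvexCone ℝ E) (v : E) : Prop where
  isClosed : IsClosed (K : Set E)
  salient : K.Salient
  ne_zero : v ≠ 0
  mem_interior : v ∈ interior (K : Set E)

-- Bushell's `M(z/v) = inf {c | z ≤ c • v}` for the order of `K`
noncomputable def maxRatio (K : ConvexCone ℝ E) (z v : E) : ℝ :=
  sInf {c : ℝ | c • v - z ∈ K}

namespace IsInteriorUnit

variable {K : ConvexCone ℝ E} {v : E}

theorem mem (h : K.IsInteriorUnit v) : v ∈ K := interior_subset h.mem_interior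

theorem zero_mem (h : K.IsInteriorUnit v) : (0 : E) ∈ K := by
  have hlim : Tendsto (fun c : ℝ => c • v) (𝓝[>] 0) (𝓝 0) :=
    ((by fun_prop : Continuous fun c : ℝ => c • v).tendsto' 0 0 (zero_smul ℝ v)).mono_left
      nhdsWithin_le_nhds
  exact h.isClosed.mem_of_tendsto hlim
    (eventually_nhdsWithin_of_forall fun c hc => K.smul_mem hc h.mem)

theorem smul_mem_iff (h : K.IsInteriorUnit v) {a : ℝ} : a • v ∈ K ↔ 0 ≤ a := by
  refine ⟨fun ha => ?_, fun ha => ?_⟩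
  · by_contra! hneg
    exact h.salient _ ha (smul_ne_zero hneg.ne h.ne_zero)
      (by simpa [neg_smul] using K.smul_mem (neg_pos.2 hneg) h.mem)
  · rcases ha.eq_or_lt with rfl | hpos
    · simpa using h.zero_mem
    · exact K.smul_mem hpos h.mem

theorem exists_smul_sub_mem (h : K.IsInteriorUnit v) (z : E) : ∃ c : ℝ, c • v - z ∈ K := by
  have hlim : Tendsto (fun s : ℝ => v - s • z) (𝓝[>] 0) (𝓝 v) :=
    ((by fun_prop : Continuous fun s : ℝ => v - s • z).tendsto' 0 v (by simp)).mono_left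
      nhdsWithin_le_nhds
  obtain ⟨s, hs, hspos⟩ :=
    ((hlim.eventually (isOpen_interior.mem_nhds h.mem_interior)).and self_mem_nhdsWithin).exists
  refine ⟨s⁻¹, ?_⟩
  have := K.smul_mem (inv_pos.2 hspos) (interior_subset hs)
  rwa [smul_sub, smul_smul, inv_mul_cancel₀ hspos.ne', one_smul] at this

theorem bddBelow (h : K.IsInteriorUnit v) (z : E) : BddBelow {c : ℝ | c • v - z ∈ K} := by
  obtain ⟨c₀, hc₀⟩ := h.exists_smul_sub_mem (-z)
  refine ⟨-c₀, fun c hc => ?_⟩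
  have : (c + c₀) • v ∈ K := by
    convert K.add_mem hc hc₀ using 1
    module
  linarith [h.smul_mem_iff.1 this]

theorem smul_maxRatio_sub_mem (h : K.IsInteriorUnit v) (z : E) : K.maxRatio z v • v - z ∈ K :=
  (h.isClosed.preimage (by fun_prop : Continuous fun c : ℝ => c • v - z)).csInf_mem
    (h.exists_smul_sub_mem z) (h.bddBelow z)

theorem maxRatio_le (h : K.IsInteriorUnit v) {c : ℝ} {z : E} (hc : c • v - z ∈ K) :
    K.maxRatio z v ≤ c :=
  csInf_le (h.bddBelow z) hc

theorem maxRatio_lt (h : K.IsInteriorUnit v) {c : ℝ} {z : E}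
    (hc : c • v - z ∈ interior (K : Set E)) : K.maxRatio z v < c := by
  have hlim : Tendsto (fun s : ℝ => (c - s) • v - z) (𝓝[>] 0) (𝓝 (c • v - z)) :=
    ((by fun_prop : Continuous fun s : ℝ => (c - s) • v - z).tendsto' 0 _
      (by rw [sub_zero])).mono_left nhdsWithin_le_nhds
  obtain ⟨s, hs, hspos⟩ :=
    ((hlim.eventually (isOpen_interior.mem_nhds hc)).and self_mem_nhdsWithin).exists
  linarith [h.maxRatio_le (interior_subset hs), show (0 : ℝ) < s from hspos]

theorem maxRatio_add_le (h : K.IsInteriorUnit v) (z z' : E) :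
    K.maxRatio (z + z') v ≤ K.maxRatio z v + K.maxRatio z' v :=
  h.maxRatio_le <| by
    convert K.add_mem (h.smul_maxRatio_sub_mem z) (h.smul_maxRatio_sub_mem z') using 1
    module

theorem maxRatio_add_smul (h : K.IsInteriorUnit v) (z : E) (a : ℝ) :
    K.maxRatio (z + a • v) v = K.maxRatio z v + a := by
  refine le_antisymm (h.maxRatio_le ?_) ?_
  · convert h.smul_maxRatio_sub_mem z using 1
    module
  · have := h.maxRatio_le (c := K.maxRatio (z + a • v) v - a) (z := z) <| by
      convert h.smul_maxRatio_sub_mem (z + a • v) using 1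
      module
    linarith

theorem maxRatio_zero (h : K.IsInteriorUnit v) : K.maxRatio 0 v = 0 :=
  le_antisymm (h.maxRatio_le (by simpa using h.zero_mem))
    (h.smul_mem_iff.1 (by simpa using h.smul_maxRatio_sub_mem 0))

theorem maxRatio_smul_self (h : K.IsInteriorUnit v) (a : ℝ) : K.maxRatio (a • v) v = a := by
  simpa [h.maxRatio_zero] using h.maxRatio_add_smul 0 a

theorem maxRatio_smul (h : K.IsInteriorUnit v) {c : ℝ} (hc : 0 < c) (z : E) :
    K.maxRatio (c • z) v = c * K.maxRatio z v := by
  refine le_antisymm (h.maxRatio_le ?_) ?_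
  · convert K.smul_mem hc (h.smul_maxRatio_sub_mem z) using 1
    rw [smul_sub, smul_smul]
  · refine (le_inv_mul_iff₀ hc).1 (h.maxRatio_le ?_)
    convert K.smul_mem (inv_pos.2 hc) (h.smul_maxRatio_sub_mem (c • z)) using 1
    rw [smul_sub, smul_smul, smul_smul, inv_mul_cancel₀ hc.ne', one_smul]

-- `M(z/v) - m(z/v)` with `m(z/v) = -M(-z/v)`: the oscillation of `z` relative to `v`
noncomputable def osc (h : K.IsInteriorUnit v) : Seminorm ℝ E :=
  Seminorm.of (fun z => K.maxRatio z v + K.maxRatio (-z) v)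
    (fun z z' => by
      have := h.maxRatio_add_le z z'
      have := h.maxRatio_add_le (-z) (-z')
      rw [neg_add]
      linarith)
    (fun c z => by
      rcases lt_trichotomy c 0 with hc | rfl | hc
      · rw [show c • z = (-c) • -z by simp, ← smul_neg, neg_neg,
          h.maxRatio_smul (neg_pos.2 hc), h.maxRatio_smul (neg_pos.2 hc),
          Real.norm_of_nonpos hc.le]
        ring
      · simp [h.maxRatio_zero]
      · rw [← smul_neg, h.maxRatio_smul hc, h.maxRatio_smul hc, Real.norm_of_nonneg hc.le]
        ring)

theorem osc_apply (h : K.IsInteriorUnit v) (z : E) :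
    h.osc z = K.maxRatio z v + K.maxRatio (-z) v :=
  rfl

theorem osc_eq_zero_iff (h : K.IsInteriorUnit v) {z : E} : h.osc z = 0 ↔ z ∈ ℝ ∙ v := by
  refine ⟨fun hz => Submodule.mem_span_singleton.2 ⟨K.maxRatio z v, ?_⟩, ?_⟩
  · rw [← sub_eq_zero]
    by_contra hne
    refine h.salient _ (h.smul_maxRatio_sub_mem z) hne ?_
    convert h.smul_maxRatio_sub_mem (-z) using 1
    rw [osc_apply] at hz
    rw [show K.maxRatio (-z) v = -K.maxRatio z v by linarith]
    module
  · intro hz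
    obtain ⟨a, rfl⟩ := Submodule.mem_span_singleton.1 hz
    rw [osc_apply, ← neg_smul, h.maxRatio_smul_self, h.maxRatio_smul_self, add_neg_cancel]

end IsInteriorUnit

end ConvexCone

end Cone

section Seminorm

variable {E : Type*}

theorem Seminorm.map_add_eq_left {𝕜 : Type*} [SeminormedRing 𝕜] [AddCommGroup E] [Module 𝕜 E]
    (p : Seminorm 𝕜 E) {z w : E} (hw : p w = 0) : p (z + w) = p z := by
  have := p.norm_sub_map_le_sub (z + w) z
  rwa [add_sub_cancel_left, hw, norm_le_zero_iff, sub_eq_zero] at this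

theorem Seminorm.continuous_of_finiteDimensional [NormedAddCommGroup E] [NormedSpace ℝ E]
    [FiniteDimensional ℝ E] (p : Seminorm ℝ E) : Continuous p :=
  continuousOn_univ.1 (p.convexOn.continuousOn isOpen_univ)

theorem Seminorm.exists_le_mul_of_eq_zero_iff [NormedAddCommGroup E] [InnerProductSpace ℝ E]
    [FiniteDimensional ℝ E] (p q : Seminorm ℝ E) (N : Submodule ℝ E) (hp : ∀ z ∈ N, p z = 0)
    (hq : ∀ z, q z = 0 ↔ z ∈ N) : ∃ C, ∀ z, p z ≤ C * q z := by
  set S := (Nᗮ : Set E) ∩ Metric.sphere 0 1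
  have hqS : ∀ w ∈ S, q w ≠ 0 := fun w ⟨hwN, hw1⟩ hw0 => by
    have : w ∈ N ⊓ Nᗮ := ⟨(hq w).1 hw0, hwN⟩
    rw [N.inf_orthogonal_eq_bot, Submodule.mem_bot] at this
    simp [this] at hw1
  obtain ⟨C, hC⟩ := ((isCompact_sphere 0 1).inter_left N.isClosed_orthogonal
    |>.image_of_continuousOn (p.continuous_of_finiteDimensional.continuousOn.div
      q.continuous_of_finiteDimensional.continuousOn hqS)).bddAbove
  refine ⟨max C 0, fun z => ?_⟩
  obtain ⟨a, ha, b, hb, rfl⟩ := N.exists_add_mem_mem_orthogonal z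
  rw [add_comm, p.map_add_eq_left (hp a ha), q.map_add_eq_left ((hq a).2 ha)]
  rcases eq_or_ne b 0 with rfl | hb0
  · simp
  have hbS : ‖b‖⁻¹ • b ∈ S := ⟨Nᗮ.smul_mem _ hb, by simp [norm_smul, hb0]⟩
  have hqb : 0 < q b := by
    refine (apply_nonneg q b).lt_of_ne fun h0 => hqS _ hbS ?_
    rw [map_smul_eq_mul, ← h0, mul_zero]
  have : p (‖b‖⁻¹ • b) / q (‖b‖⁻¹ • b) ≤ C := hC ⟨_, hbS, rfl⟩
  rw [map_smul_eq_mul, map_smul_eq_mul, mul_div_mul_left _ _ (by simpa using hb0),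
    div_le_iff₀ hqb] at this
  exact this.trans (mul_le_mul_of_nonneg_right (le_max_left _ _) hqb.le)

end Seminorm

section Semiflow

variable {E : Type*} [NormedAddCommGroup E] [NormedSpace ℝ E]

structure IsStronglyMonotoneSemiflow (K : ConvexCone ℝ E) (v : E) (X : Set E)
    (φ : ℝ → E → E) : Prop where
  mem : ∀ x ∈ X, ∀ t, 0 ≤ t → φ t x ∈ X
  zero : ∀ x ∈ X, φ 0 x = x
  flow_add : ∀ x ∈ X, ∀ s t, 0 ≤ s → 0 ≤ t → φ (s + t) x = φ t (φ s x)
  add_smul_mem : ∀ x ∈ X, ∀ c : ℝ, x + c • v ∈ X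
  flow_add_smul : ∀ x ∈ X, ∀ c : ℝ, ∀ t, 0 ≤ t → φ t (x + c • v) = φ t x + c • v
  sub_mem_interior : ∀ x₁ ∈ X, ∀ x₂ ∈ X, ∀ t, 0 < t → x₁ - x₂ ∈ K → x₁ ≠ x₂ →
    φ t x₁ - φ t x₂ ∈ interior (K : Set E)

namespace IsStronglyMonotoneSemiflow

variable {K : ConvexCone ℝ E} {v : E} {X : Set E} {φ : ℝ → E → E} {x y : E} {t : ℝ}

theorem sub_mem (hφ : IsStronglyMonotoneSemiflow K v X φ) (hK : K.IsInteriorUnit v)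
    (hx : x ∈ X) (hy : y ∈ X) (ht : 0 ≤ t) (hxy : x - y ∈ K) : φ t x - φ t y ∈ K := by
  rcases eq_or_ne x y with rfl | hne
  · simpa using hK.zero_mem
  rcases ht.eq_or_lt with rfl | htpos
  · rwa [hφ.zero x hx, hφ.zero y hy]
  exact interior_subset (hφ.sub_mem_interior x hx y hy t htpos hxy hne)

-- `x ≤ y + M(x - y) • v`, and the orbit of the right-hand side is that of `y` translated
theorem maxRatio_sub_le (hφ : IsStronglyMonotoneSemiflow K v X φ) (hK : K.IsInteriorUnit v)
    (hx : x ∈ X) (hy : y ∈ X) (ht : 0 ≤ t) :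
    K.maxRatio (φ t x - φ t y) v ≤ K.maxRatio (x - y) v := by
  set c := K.maxRatio (x - y) v
  have h := hφ.sub_mem hK (hφ.add_smul_mem y hy c) hx ht
    (by convert hK.smul_maxRatio_sub_mem (x - y) using 1; abel)
  rw [hφ.flow_add_smul y hy c t ht] at h
  exact hK.maxRatio_le (by convert h using 1; abel)

theorem maxRatio_sub_lt (hφ : IsStronglyMonotoneSemiflow K v X φ) (hK : K.IsInteriorUnit v)
    (hx : x ∈ X) (hy : y ∈ X) (ht : 0 < t) (hxy : x - y ∉ ℝ ∙ v) :
    K.maxRatio (φ t x - φ t y) v < K.maxRatio (x - y) v := by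
  set c := K.maxRatio (x - y) v
  have hne : y + c • v ≠ x := fun h => hxy (Submodule.mem_span_singleton.2 ⟨c, by rw [← h]; abel⟩)
  have h := hφ.sub_mem_interior _ (hφ.add_smul_mem y hy c) x hx t ht
    (by convert hK.smul_maxRatio_sub_mem (x - y) using 1; abel) hne
  rw [hφ.flow_add_smul y hy c t ht.le] at h
  exact hK.maxRatio_lt (by convert h using 1; abel)

theorem osc_sub_le (hφ : IsStronglyMonotoneSemiflow K v X φ) (hK : K.IsInteriorUnit v)
    (hx : x ∈ X) (hy : y ∈ X) (ht : 0 ≤ t) : hK.osc (φ t x - φ t y) ≤ hK.osc (x - y) := by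
  simp only [hK.osc_apply, neg_sub]
  linarith [hφ.maxRatio_sub_le hK hx hy ht, hφ.maxRatio_sub_le hK hy hx ht]

theorem osc_sub_lt (hφ : IsStronglyMonotoneSemiflow K v X φ) (hK : K.IsInteriorUnit v)
    (hx : x ∈ X) (hy : y ∈ X) (ht : 0 < t) (hxy : x - y ∉ ℝ ∙ v) :
    hK.osc (φ t x - φ t y) < hK.osc (x - y) := by
  simp only [hK.osc_apply, neg_sub]
  linarith [hφ.maxRatio_sub_lt hK hx hy ht hxy, hφ.maxRatio_sub_le hK hy hx ht.le]

theorem antitoneOn_osc_sub (hφ : IsStronglyMonotoneSemiflow K v X φ) (hK : K.IsInteriorUnit v)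
    (hx : x ∈ X) (hy : y ∈ X) : AntitoneOn (fun t => hK.osc (φ t x - φ t y)) (Ici 0) := by
  intro s hs t _ hst
  have hsplit : ∀ z ∈ X, φ t z = φ (t - s) (φ s z) := fun z hz => by
    rw [← hφ.flow_add z hz s (t - s) hs (sub_nonneg.2 hst), add_sub_cancel]
  simp only [hsplit x hx, hsplit y hy]
  exact hφ.osc_sub_le hK (hφ.mem x hx s hs) (hφ.mem y hy s hs) (sub_nonneg.2 hst)

theorem exists_tendsto_osc_sub (hφ : IsStronglyMonotoneSemiflow K v X φ)
    (hK : K.IsInteriorUnit v) (hx : x ∈ X) (hy : y ∈ X) :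
    ∃ L, Tendsto (fun t => hK.osc (φ t x - φ t y)) atTop (𝓝 L) := by
  set f := fun t => hK.osc (φ t x - φ t y)
  have hanti : Antitone fun t => f (max t 0) := fun s t hst =>
    hφ.antitoneOn_osc_sub hK hx hy (le_max_right s 0) (le_max_right t 0) (max_le_max_right 0 hst)
  refine ⟨_, (tendsto_atTop_ciInf hanti ⟨0, ?_⟩).congr' ?_⟩
  · rintro _ ⟨t, rfl⟩
    exact apply_nonneg _ _
  · filter_upwards [eventually_ge_atTop 0] with t ht
    rw [max_eq_left ht]

theorem abs_osc_sub_sub_osc_sub_le (hφ : IsStronglyMonotoneSemiflow K v X φ)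
    (hK : K.IsInteriorUnit v) {x' y' : E} (hx : x ∈ X) (hy : y ∈ X) (hx' : x' ∈ X) (hy' : y' ∈ X)
    (ht : 0 ≤ t) :
    |hK.osc (φ t x - φ t y) - hK.osc (φ t x' - φ t y')| ≤ hK.osc (x - x') + hK.osc (y - y') :=
  calc |hK.osc (φ t x - φ t y) - hK.osc (φ t x' - φ t y')|
      ≤ hK.osc ((φ t x - φ t y) - (φ t x' - φ t y')) := hK.osc.norm_sub_map_le_sub _ _
    _ = hK.osc ((φ t x - φ t x') - (φ t y - φ t y')) := by congr 1; abel
    _ ≤ hK.osc (φ t x - φ t x') + hK.osc (φ t y - φ t y') := map_sub_le_add _ _ _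
    _ ≤ hK.osc (x - x') + hK.osc (y - y') :=
      add_le_add (hφ.osc_sub_le hK hx hx' ht) (hφ.osc_sub_le hK hy hy' ht)

-- `osc (φ t (φ τ x₀) - φ t x₀)` has a limit `L`; along `t = tₖ + s` it approaches
-- `osc (φ s (φ τ x) - φ s x)`, which is therefore `L` for every `s ≥ 0`, and strict decrease
-- between `s = 0` and `s = 1` forces `φ τ x - x ∈ ℝ ∙ v`
theorem flow_sub_mem_span_of_tendsto (hφ : IsStronglyMonotoneSemiflow K v X φ)
    (hK : K.IsInteriorUnit v) {x₀ : E} (hx₀ : x₀ ∈ X) (hx : x ∈ X) {tk : ℕ → ℝ}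
    (htk : Tendsto tk atTop atTop)
    (hlim : Tendsto (fun k => hK.osc (φ (tk k) x₀ - x)) atTop (𝓝 0)) {τ : ℝ} (hτ : 0 ≤ τ) :
    φ τ x - x ∈ ℝ ∙ v := by
  have hτx := hφ.mem x hx τ hτ
  obtain ⟨L, hL⟩ := hφ.exists_tendsto_osc_sub hK (hφ.mem x₀ hx₀ τ hτ) hx₀
  have key : ∀ s, 0 ≤ s → hK.osc (φ s (φ τ x) - φ s x) = L := by
    intro s hs
    set w := fun k => φ (tk k) x₀
    have hw : ∀ᶠ k in atTop, hK.osc (φ (tk k + s) (φ τ x₀) - φ (tk k + s) x₀)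
        = hK.osc (φ s (φ τ (w k)) - φ s (w k)) := by
      filter_upwards [htk.eventually_ge_atTop 0] with k hk
      rw [hφ.flow_add _ hx₀ _ _ hk hs, hφ.flow_add _ (hφ.mem x₀ hx₀ τ hτ) _ _ hk hs,
        ← hφ.flow_add _ hx₀ _ _ hτ hk, add_comm τ, hφ.flow_add _ hx₀ _ _ hk hτ]
    refine tendsto_nhds_unique ?_ ((hL.comp (tendsto_atTop_add_const_right _ s htk)).congr' hw)
    rw [tendsto_iff_norm_sub_tendsto_zero]
    refine squeeze_zero' (Eventually.of_forall fun _ => norm_nonneg _) ?_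
      (by simpa using (hlim.const_mul 2))
    filter_upwards [htk.eventually_ge_atTop 0] with k hk
    have hwX := hφ.mem x₀ hx₀ _ hk
    have := hφ.abs_osc_sub_sub_osc_sub_le hK (hφ.mem _ hwX τ hτ) hwX hτx hx hs
    have := hφ.osc_sub_le hK hwX hx hτ
    rw [Real.norm_eq_abs]
    linarith
  by_contra hmem
  have := hφ.osc_sub_lt hK hτx hx one_pos hmem
  rw [key 1 zero_le_one, ← key 0 le_rfl, hφ.zero _ hτx, hφ.zero x hx] at this
  exact lt_irrefl _ this

theorem tendsto_osc_sub_of_tendsto (hφ : IsStronglyMonotoneSemiflow K v X φ)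
    (hK : K.IsInteriorUnit v) {x₀ : E} (hx₀ : x₀ ∈ X) (hx : x ∈ X)
    (hfix : ∀ τ, 0 ≤ τ → φ τ x - x ∈ ℝ ∙ v) {tk : ℕ → ℝ} (htk : Tendsto tk atTop atTop)
    (hlim : Tendsto (fun k => hK.osc (φ (tk k) x₀ - x)) atTop (𝓝 0)) :
    Tendsto (fun t => hK.osc (φ t x₀ - x)) atTop (𝓝 0) := by
  have heq : ∀ t, 0 ≤ t → hK.osc (φ t x₀ - φ t x) = hK.osc (φ t x₀ - x) := fun t ht => by
    rw [← hK.osc.map_add_eq_left (hK.osc_eq_zero_iff.2 (hfix t ht))]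
    congr 1
    abel
  obtain ⟨L, hL⟩ := hφ.exists_tendsto_osc_sub hK hx₀ hx
  have hL0 : L = 0 := tendsto_nhds_unique (hL.comp htk) <| hlim.congr' <| by
    filter_upwards [htk.eventually_ge_atTop 0] with k hk using (heq _ hk).symm
  subst hL0
  exact hL.congr' (by filter_upwards [eventually_ge_atTop 0] with t ht using heq t ht)

theorem sub_mem_span_of_flow_sub_mem_span (hφ : IsStronglyMonotoneSemiflow K v X φ)
    (hK : K.IsInteriorUnit v) (hx : x ∈ X) (hy : y ∈ X)
    (hfx : ∀ τ, 0 ≤ τ → φ τ x - x ∈ ℝ ∙ v) (hfy : ∀ τ, 0 ≤ τ → φ τ y - y ∈ ℝ ∙ v) :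
    x - y ∈ ℝ ∙ v := by
  by_contra hxy
  have := hφ.osc_sub_lt hK hx hy one_pos hxy
  rw [show φ 1 x - φ 1 y = (x - y) + ((φ 1 x - x) - (φ 1 y - y)) by abel,
    hK.osc.map_add_eq_left
      (hK.osc_eq_zero_iff.2 (Submodule.sub_mem _ (hfx 1 zero_le_one) (hfy 1 zero_le_one)))] at this
  exact lt_irrefl _ this

end IsStronglyMonotoneSemiflow

end Semiflow

theorem exists_tendsto_atTop_tendsto_comp_of_norm_le {F : Type*} [NormedAddCommGroup F]
    [ProperSpace F] {u : ℝ → F} {S : Set F} (hS : IsClosed S) (hu : ∀ t, 0 ≤ t → u t ∈ S)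
    {M : ℝ} (hM : ∀ t, 0 ≤ t → ‖u t‖ ≤ M) :
    ∃ tk : ℕ → ℝ, Tendsto tk atTop atTop ∧ ∃ z ∈ S, Tendsto (u ∘ tk) atTop (𝓝 z) := by
  obtain ⟨z, hz, k, hk, hlim⟩ := ((isCompact_closedBall (0 : F) M).inter_left hS).tendsto_subseq
    (x := fun k : ℕ => u k)
    fun k => ⟨hu k k.cast_nonneg, mem_closedBall_zero_iff.2 (hM k k.cast_nonneg)⟩
  exact ⟨fun j => (k j : ℝ), tendsto_natCast_atTop_atTop.comp hk.tendsto_atTop, z, hz.1, hlim⟩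

section Extent

variable {E F : Type*} [NormedAddCommGroup E] [InnerProductSpace ℝ E] [FiniteDimensional ℝ E]
  [NormedAddCommGroup F] [NormedSpace ℝ F]
  {Γ : E →ₗ[ℝ] F} {R : F → E} {P : Set F} {σ : F} {ψ : ℝ → E → E}

theorem ConvexCone.IsInteriorUnit.exists_osc_le_and_norm_le {K : ConvexCone ℝ E} {v : E}
    (hK : K.IsInteriorUnit v) (hker : LinearMap.ker Γ = ℝ ∙ v) :
    ∃ C₁ C₂ : ℝ, ∀ z, hK.osc z ≤ C₁ * ‖Γ z‖ ∧ ‖Γ z‖ ≤ C₂ * hK.osc z := by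
  have hΓ : ∀ z, (normSeminorm ℝ F).comp Γ z = 0 ↔ z ∈ ℝ ∙ v := fun z => by
    simp [← hker]
  obtain ⟨C₁, hC₁⟩ := hK.osc.exists_le_mul_of_eq_zero_iff _ (ℝ ∙ v)
    (fun z hz => hK.osc_eq_zero_iff.2 hz) hΓ
  obtain ⟨C₂, hC₂⟩ := ((normSeminorm ℝ F).comp Γ).exists_le_mul_of_eq_zero_iff hK.osc (ℝ ∙ v)
    (fun z hz => (hΓ z).2 hz) fun z => hK.osc_eq_zero_iff
  exact ⟨C₁, C₂, fun z => ⟨hC₁ z, hC₂ z⟩⟩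

theorem locallyLipschitzOn_extent (hR : LocallyLipschitzOn P R) :
    LocallyLipschitzOn {x | σ + Γ x ∈ P} fun x => R (σ + Γ x) :=
  hR.comp_lipschitzWith (g := fun x => σ + Γ x) <| LipschitzWith.of_dist_le_mul fun x y => by
    rw [dist_add_left]
    exact Γ.toContinuousLinearMap.lipschitz.dist_le_mul x y

theorem hasDerivWithinAt_extent
    (hψ : IsForwardFlowOn (fun x => R (σ + Γ x)) {x | σ + Γ x ∈ P} ψ) {x : E}
    (hx : σ + Γ x ∈ P) {t : ℝ} (ht : 0 ≤ t) :
    HasDerivWithinAt (fun s => σ + Γ (ψ s x)) (Γ (R (σ + Γ (ψ t x)))) (Ici 0) t :=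
  (Γ.toContinuousLinearMap.hasFDerivAt.comp_hasDerivWithinAt t
    (hψ.hasDerivWithinAt x hx t ht)).const_add σ

theorem eqOn_extent (hR : LocallyLipschitzOn P R)
    (hψ : IsForwardFlowOn (fun x => R (σ + Γ x)) {x | σ + Γ x ∈ P} ψ) {x : E}
    (hx : σ + Γ x ∈ P) {S : ℝ → F} (hS0 : S 0 = σ + Γ x)
    (hS : ∀ t, 0 ≤ t → S t ∈ P ∧ HasDerivWithinAt S (Γ (R (S t))) (Ici 0) t) :
    EqOn S (fun t => σ + Γ (ψ t x)) (Ici 0) :=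
  ODE_solution_unique_Ici_of_locallyLipschitzOn (F := fun y => Γ (R y))
    (Γ.toContinuousLinearMap.lipschitz.comp_locallyLipschitzOn hR) hS
    (fun t ht => ⟨hψ.mem x hx t ht, hasDerivWithinAt_extent hψ hx ht⟩)
    (by rw [hS0, hψ.zero x hx])

theorem isStronglyMonotoneSemiflow_extent {K : ConvexCone ℝ E} {v : E}
    (hR : LocallyLipschitzOn P R)
    (hψ : IsForwardFlowOn (fun x => R (σ + Γ x)) {x | σ + Γ x ∈ P} ψ) (hΓv : Γ v = 0)
    (hmono : ∀ x₁ ∈ {x | σ + Γ x ∈ P}, ∀ x₂ ∈ {x | σ + Γ x ∈ P}, ∀ t, 0 < t →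
      x₁ - x₂ ∈ K → x₁ ≠ x₂ → ψ t x₁ - ψ t x₂ ∈ interior (K : Set E)) :
    IsStronglyMonotoneSemiflow K v {x | σ + Γ x ∈ P} ψ where
  mem := hψ.mem
  zero := hψ.zero
  flow_add _ hx _ _ hs ht := hψ.flow_add (locallyLipschitzOn_extent hR) hx hs ht
  add_smul_mem x hx c := by simpa [hΓv] using hx
  flow_add_smul _ hx _ _ ht := hψ.flow_add_const (locallyLipschitzOn_extent hR) (by simp [hΓv])
    (fun y hy => by simpa [hΓv] using hy) hx ht
  sub_mem_interior := hmono

theorem exists_tendsto_extent [FiniteDimensional ℝ F] {K : ConvexCone ℝ E} {v : E}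
    (hP : IsClosed P)
    (hψ : IsForwardFlowOn (fun x => R (σ + Γ x)) {x | σ + Γ x ∈ P} ψ)
    (hφ : IsStronglyMonotoneSemiflow K v {x | σ + Γ x ∈ P} ψ) (hK : K.IsInteriorUnit v)
    (hker : LinearMap.ker Γ = ℝ ∙ v)
    (hbdd : ∀ S : ℝ → F, S 0 ∈ P → (∀ t, 0 ≤ t → S t ∈ P ∧
      HasDerivWithinAt S (Γ (R (S t))) (Ici 0) t) → ∃ M, ∀ t, 0 ≤ t → ‖S t‖ ≤ M)
    {x₀ : E} (hx₀ : σ + Γ x₀ ∈ P) :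
    ∃ x, σ + Γ x ∈ P ∧ (∀ τ, 0 ≤ τ → ψ τ x - x ∈ ℝ ∙ v) ∧
      Tendsto (fun t => Γ (ψ t x₀)) atTop (𝓝 (Γ x)) := by
  obtain ⟨M, hM⟩ := hbdd _ (by rwa [hψ.zero x₀ hx₀])
    fun t ht => ⟨hψ.mem x₀ hx₀ t ht, hasDerivWithinAt_extent hψ hx₀ ht⟩
  have hclosed : IsClosed {y | y ∈ P ∧ y - σ ∈ LinearMap.range Γ} :=
    hP.inter ((LinearMap.range Γ).closed_of_finiteDimensional.preimage (continuous_sub_right σ))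
  obtain ⟨tk, htk, z, ⟨hzP, x, hx⟩, hlim⟩ := exists_tendsto_atTop_tendsto_comp_of_norm_le
    (u := fun t => σ + Γ (ψ t x₀)) hclosed
    (fun t ht => ⟨hψ.mem x₀ hx₀ t ht, ψ t x₀, (add_sub_cancel_left _ _).symm⟩) hM
  obtain rfl : z = σ + Γ x := by rw [hx, add_sub_cancel]
  obtain ⟨C₁, C₂, hC⟩ := hK.exists_osc_le_and_norm_le hker
  have hΓlim : Tendsto (fun k => ‖Γ (ψ (tk k) x₀ - x)‖) atTop (𝓝 0) := by
    simpa [map_sub] using (tendsto_iff_norm_sub_tendsto_zero.1 hlim)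
  have hosc : Tendsto (fun k => hK.osc (ψ (tk k) x₀ - x)) atTop (𝓝 0) :=
    squeeze_zero (fun _ => apply_nonneg _ _) (fun k => (hC _).1) (by simpa using hΓlim.const_mul C₁)
  have hfix : ∀ τ, 0 ≤ τ → ψ τ x - x ∈ ℝ ∙ v := fun τ hτ =>
    hφ.flow_sub_mem_span_of_tendsto hK hx₀ hzP htk hosc hτ
  refine ⟨x, hzP, hfix, tendsto_iff_norm_sub_tendsto_zero.2 ?_⟩
  refine squeeze_zero (fun _ => norm_nonneg _) (fun t => ?_)
    (by simpa using (hφ.tendsto_osc_sub_of_tendsto hK hx₀ hzP hfix htk hosc).const_mul C₂)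
  simpa [map_sub] using (hC (ψ t x₀ - x)).2

end Extent

theorem stmt17_general {n m : ℕ}
    (Γ : EuclideanSpace ℝ (Fin m) →ₗ[ℝ] EuclideanSpace ℝ (Fin n))
    (R : EuclideanSpace ℝ (Fin n) → EuclideanSpace ℝ (Fin m))
    -- R is locally Lipschitz on the nonnegative orthant
    (hR : ∀ S₀ : EuclideanSpace ℝ (Fin n), (∀ i, 0 ≤ S₀ i) →
      ∃ L : NNReal, ∃ U ∈ nhdsWithin S₀ {S : EuclideanSpace ℝ (Fin n) | ∀ i, 0 ≤ S i},
        LipschitzOnWith L R U)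
    -- (1) ker Γ is spanned by a unit vector v with strictly positive entries
    (v : EuclideanSpace ℝ (Fin m)) (hvnorm : ‖v‖ = 1)
    (hker : LinearMap.ker Γ = Submodule.span ℝ {v})
    -- (2) every solution of the chemical system on the orthant is bounded
    (hbdd : ∀ S : ℝ → EuclideanSpace ℝ (Fin n), (∀ i, 0 ≤ S 0 i) →
      (∀ t : ℝ, 0 ≤ t → (∀ i, 0 ≤ S t i) ∧
        HasDerivWithinAt S (Γ (R (S t))) (Set.Ici 0) t) →
      ∃ M : ℝ, ∀ t : ℝ, 0 ≤ t → ‖S t‖ ≤ M)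
    (σ : EuclideanSpace ℝ (Fin n)) (hσ : ∀ i, 0 ≤ σ i)
    -- K is a closed pointed convex cone in ℝ^m with v ∈ interior K
    (K : Set (EuclideanSpace ℝ (Fin m)))
    (hKclosed : IsClosed K) (hKconv : Convex ℝ K)
    (hKcone : ∀ c : ℝ, 0 ≤ c → ∀ x ∈ K, c • x ∈ K)
    (hKpointed : ∀ x ∈ K, -x ∈ K → x = 0)
    (hv : v ∈ interior K)
    -- (3) ψ is the forward complete flow of the extent system ẋ = R(σ + Γ x) on X_σ,
    -- and it is strongly monotone
    (ψ : ℝ → EuclideanSpace ℝ (Fin m) → EuclideanSpace ℝ (Fin m))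
    (hψ0 : ∀ x, (∀ i, 0 ≤ (σ + Γ x) i) → ψ 0 x = x)
    (hψX : ∀ x, (∀ i, 0 ≤ (σ + Γ x) i) → ∀ t : ℝ, 0 ≤ t → ∀ i, 0 ≤ (σ + Γ (ψ t x)) i)
    (hψode : ∀ x, (∀ i, 0 ≤ (σ + Γ x) i) → ∀ t : ℝ, 0 ≤ t →
      HasDerivWithinAt (fun s => ψ s x) (R (σ + Γ (ψ t x))) (Set.Ici 0) t)
    (hmono : ∀ x₁, (∀ i, 0 ≤ (σ + Γ x₁) i) → ∀ x₂, (∀ i, 0 ≤ (σ + Γ x₂) i) →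
      ∀ t : ℝ, 0 < t → x₁ - x₂ ∈ K → x₁ ≠ x₂ → ψ t x₁ - ψ t x₂ ∈ interior K) :
    ∃ ζ : EuclideanSpace ℝ (Fin n), (∀ i, 0 ≤ ζ i) ∧
      ∀ ρ : EuclideanSpace ℝ (Fin n), (∀ i, 0 ≤ ρ i) → ρ - σ ∈ LinearMap.range Γ →
        ∀ S : ℝ → EuclideanSpace ℝ (Fin n), S 0 = ρ →
          (∀ t : ℝ, 0 ≤ t → (∀ i, 0 ≤ S t i) ∧
            HasDerivWithinAt S (Γ (R (S t))) (Set.Ici 0) t) →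
          Tendsto S atTop (𝓝 ζ) := by
  set P := {S : EuclideanSpace ℝ (Fin n) | ∀ i, 0 ≤ S i}
  have hP : IsClosed P := by
    simp only [P, ofPred_forall]
    exact isClosed_iInter fun i => isClosed_le continuous_const (by fun_prop)
  have hΓv : Γ v = 0 := by
    rw [← LinearMap.mem_ker, hker]
    exact Submodule.mem_span_singleton_self v
  set Kc := ConvexCone.ofConvex hKconv fun c hc => hKcone c hc.le
  have hK : Kc.IsInteriorUnit v :=
    ⟨hKclosed, fun x hx hx0 hnx => hx0 (hKpointed x hx hnx),
      by rintro rfl; simp at hvnorm, hv⟩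
  have hψ : IsForwardFlowOn (fun x => R (σ + Γ x)) {x | σ + Γ x ∈ P} ψ := ⟨hψ0, hψX, hψode⟩
  have hφ := isStronglyMonotoneSemiflow_extent (K := Kc) (v := v) hR hψ hΓv hmono
  obtain ⟨ζ, hζ, hfixζ, -⟩ :=
    exists_tendsto_extent hP hψ hφ hK hker hbdd (x₀ := 0) (by simpa [P] using hσ)
  refine ⟨σ + Γ ζ, hζ, fun ρ hρ ⟨x, hx⟩ S hS0 hS => ?_⟩
  have hxP : σ + Γ x ∈ P := by rwa [hx, add_sub_cancel]
  obtain ⟨ξ, hξ, hfixξ, hlim⟩ := exists_tendsto_extent hP hψ hφ hK hker hbdd hxP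
  have hξζ : Γ ξ = Γ ζ := by
    rw [← sub_eq_zero, ← map_sub, ← LinearMap.mem_ker, hker]
    exact hφ.sub_mem_span_of_flow_sub_mem_span hK hξ hζ hfixξ hfixζ
  rw [← hξζ]
  refine (tendsto_const_nhds.add hlim).congr' ?_
  filter_upwards [eventually_ge_atTop 0] with t ht
  exact (eqOn_extent hR hψ hxP (by rw [hS0, hx, add_sub_cancel]) hS ht).symm

/-- suppose (1) `ker Γ` is spanned by a unit vector `v` with strictly
positive entries; (2) every solution of the chemical system `Ṡ = Γ R(S)` on the
nonnegative orthant is bounded; (3) the extent system `ẋ = R(σ + Γ x)` on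
`X_σ = {x : σ + Γ x ≥ 0}` is strongly monotone with respect to a closed pointed convex
cone `K` with `v ∈ interior K` (its forward complete flow `ψ` satisfies
`x₁ ≻ x₂ ⟹ ψ_t(x₁) ≫ ψ_t(x₂)` for `t > 0`).  Then there is `ζ = ζ_σ ≥ 0` such that
for every `ρ ≥ 0` with `ρ - σ ∈ Image Γ`, the solution of `Ṡ = Γ R(S)` with `S(0) = ρ`
converges to `ζ` as `t → ∞`. -/
theorem stmt17 {n m : ℕ}
    (Γ : EuclideanSpace ℝ (Fin m) →ₗ[ℝ] EuclideanSpace ℝ (Fin n))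
    (R : EuclideanSpace ℝ (Fin n) → EuclideanSpace ℝ (Fin m))
    -- R is locally Lipschitz on the nonnegative orthant
    (hR : ∀ S₀ : EuclideanSpace ℝ (Fin n), (∀ i, 0 ≤ S₀ i) →
      ∃ L : NNReal, ∃ U ∈ nhdsWithin S₀ {S : EuclideanSpace ℝ (Fin n) | ∀ i, 0 ≤ S i},
        LipschitzOnWith L R U)
    -- the chemical system is forward complete on the nonnegative orthant and
    -- leaves it invariant
    (hcomplete : ∀ S₀ : EuclideanSpace ℝ (Fin n), (∀ i, 0 ≤ S₀ i) →
      ∃ S : ℝ → EuclideanSpace ℝ (Fin n), S 0 = S₀ ∧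
        ∀ t : ℝ, 0 ≤ t → (∀ i, 0 ≤ S t i) ∧
          HasDerivWithinAt S (Γ (R (S t))) (Set.Ici 0) t)
    -- (1) ker Γ is spanned by a unit vector v with strictly positive entries
    (v : EuclideanSpace ℝ (Fin m)) (hvnorm : ‖v‖ = 1) (hvpos : ∀ i, 0 < v i)
    (hker : LinearMap.ker Γ = Submodule.span ℝ {v})
    -- (2) every solution of the chemical system on the orthant is bounded
    (hbdd : ∀ S : ℝ → EuclideanSpace ℝ (Fin n), (∀ i, 0 ≤ S 0 i) →
      (∀ t : ℝ, 0 ≤ t → (∀ i, 0 ≤ S t i) ∧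
        HasDerivWithinAt S (Γ (R (S t))) (Set.Ici 0) t) →
      ∃ M : ℝ, ∀ t : ℝ, 0 ≤ t → ‖S t‖ ≤ M)
    (σ : EuclideanSpace ℝ (Fin n)) (hσ : ∀ i, 0 ≤ σ i)
    -- K is a closed pointed convex cone in ℝ^m with v ∈ interior K
    (K : Set (EuclideanSpace ℝ (Fin m)))
    (hKclosed : IsClosed K) (hKconv : Convex ℝ K)
    (hKcone : ∀ c : ℝ, 0 ≤ c → ∀ x ∈ K, c • x ∈ K)
    (hKpointed : ∀ x ∈ K, -x ∈ K → x = 0)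
    (hv : v ∈ interior K)
    -- (3) ψ is the forward complete flow of the extent system ẋ = R(σ + Γ x) on X_σ,
    -- and it is strongly monotone
    (ψ : ℝ → EuclideanSpace ℝ (Fin m) → EuclideanSpace ℝ (Fin m))
    (hψ0 : ∀ x, (∀ i, 0 ≤ (σ + Γ x) i) → ψ 0 x = x)
    (hψX : ∀ x, (∀ i, 0 ≤ (σ + Γ x) i) → ∀ t : ℝ, 0 ≤ t → ∀ i, 0 ≤ (σ + Γ (ψ t x)) i)
    (hψode : ∀ x, (∀ i, 0 ≤ (σ + Γ x) i) → ∀ t : ℝ, 0 ≤ t →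
      HasDerivWithinAt (fun s => ψ s x) (R (σ + Γ (ψ t x))) (Set.Ici 0) t)
    (hmono : ∀ x₁, (∀ i, 0 ≤ (σ + Γ x₁) i) → ∀ x₂, (∀ i, 0 ≤ (σ + Γ x₂) i) →
      ∀ t : ℝ, 0 < t → x₁ - x₂ ∈ K → x₁ ≠ x₂ → ψ t x₁ - ψ t x₂ ∈ interior K) :
    ∃ ζ : EuclideanSpace ℝ (Fin n), (∀ i, 0 ≤ ζ i) ∧
      ∀ ρ : EuclideanSpace ℝ (Fin n), (∀ i, 0 ≤ ρ i) → ρ - σ ∈ LinearMap.range Γ →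
        ∀ S : ℝ → EuclideanSpace ℝ (Fin n), S 0 = ρ →
          (∀ t : ℝ, 0 ≤ t → (∀ i, 0 ≤ S t i) ∧
            HasDerivWithinAt S (Γ (R (S t))) (Set.Ici 0) t) →
          Tendsto S atTop (𝓝 ζ) :=
  stmt17_general Γ R hR v hvnorm hker hbdd σ hσ K hKclosed hKconv hKcone hKpointed hv ψ hψ0 hψX
    hψode hmono
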